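/- arXiv:2010.02817 — 5 statements merged into one kernel-verified Lean document; each statement's English description precedes it below -/
import Mathlib

section
/- Let (Ω,Σ,μ) be a σ-finite measure space, p: Ω → (1,∞) measurable with p(t) > 1 a.e., u, v measurable, and (x_n) a sequence of measurable functions with sup_n ∫_Ω |x_n|^{p(t)} dμ < ∞. If lim_n ∫_Ω (|x_n−u|^{p(t)} + |x_n−v|^{p(t)} − 2|x_n−(u+v)/2|^{p(t)}) dμ = 0, then u = v almost everywhere. -/
/-!
If `u ≠ v` on a set of positive measure, there is a set `A` of positive measure on which `u` and
`v` are bounded, `|u - v| ≥ ε` and `p` stays in a compact subinterval of `(1, ∞)`. By Markov's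
inequality the bound on the modulars keeps `|x n|` below a fixed `R` on a part of `A` whose measure
is bounded below uniformly in `n`. There the integrand is at least a fixed `δ > 0`, by strict
convexity of `s ↦ |s| ^ q` and compactness of the parameter range, so the integrals cannot tend
to `0`.
-/

open MeasureTheory Filter Set Topology
open scoped ENNReal

noncomputable def midpointGap (q a b : ℝ) : ℝ := |a| ^ q + |b| ^ q - 2 * |(a + b) / 2| ^ q

lemma midpointGap_sub_sub (q x a b : ℝ) :
    midpointGap q (x - a) (x - b) = |x - a| ^ q + |x - b| ^ q - 2 * |x - (a + b) / 2| ^ q := by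
  rw [midpointGap, show (x - a + (x - b)) / 2 = x - (a + b) / 2 by ring]

lemma midpointGap_pos {q a b : ℝ} (hq : 1 < q) (hab : a ≠ b) : 0 < midpointGap q a b := by
  have hq0 : 0 < q := by linarith
  rw [midpointGap, sub_pos]
  rcases eq_or_ne |a| |b| with h | h
  · have ha : a ≠ 0 := by rintro rfl; exact hab (by simpa [eq_comm] using h)
    have hmid : (a + b) / 2 = 0 := by rw [(abs_eq_abs.1 h).resolve_left hab]; ring
    rw [hmid, abs_zero, Real.zero_rpow hq0.ne', mul_zero]
    exact add_pos_of_pos_of_nonneg (by positivity) (by positivity)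
  · have hmid : |(a + b) / 2| ≤ 1 / 2 * |a| + 1 / 2 * |b| := by
      rw [abs_div, abs_two]; linarith [abs_add_le a b]
    have hconv := (strictConvexOn_rpow hq).2 (abs_nonneg a) (abs_nonneg b) h
      (by norm_num : (0 : ℝ) < 1 / 2) (by norm_num : (0 : ℝ) < 1 / 2) (by norm_num)
    simp only [smul_eq_mul] at hconv
    linarith [Real.rpow_le_rpow (abs_nonneg _) hmid hq0.le]

lemma exists_pos_le_midpointGap {ε q₀ : ℝ} (hε : 0 < ε) (hq₀ : 1 < q₀) (q₁ R : ℝ) :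
    ∃ δ > 0, ∀ q a b, q₀ ≤ q → q ≤ q₁ → |a| ≤ R → |b| ≤ R → ε ≤ |a - b| →
      δ ≤ midpointGap q a b := by
  let K : Set (ℝ × ℝ × ℝ) :=
    (Icc q₀ q₁ ×ˢ Icc (-R) R ×ˢ Icc (-R) R) ∩ {w | ε ≤ |w.2.1 - w.2.2|}
  have hK : IsCompact K := (isCompact_Icc.prod (isCompact_Icc.prod isCompact_Icc)).inter_right
    (isClosed_le continuous_const (by fun_prop))
  have hcont : ContinuousOn (fun w : ℝ × ℝ × ℝ => midpointGap w.1 w.2.1 w.2.2) K := by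
    intro w hw
    have hw1 : 0 < w.1 := by linarith [hw.1.1.1]
    have hpow : ∀ g : ℝ × ℝ × ℝ → ℝ, Continuous g → ContinuousAt (fun w => |g w| ^ w.1) w :=
      fun g hg => hg.abs.continuousAt.rpow continuous_fst.continuousAt (Or.inr hw1)
    exact (((hpow _ (by fun_prop)).add (hpow _ (by fun_prop))).sub
      (continuousAt_const.mul (hpow _ (by fun_prop)))).continuousWithinAt
  have hpos : ∀ w ∈ K, 0 < midpointGap w.1 w.2.1 w.2.2 := fun w hw =>
    midpointGap_pos (hq₀.trans_le hw.1.1.1) fun h => by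
      linarith [show ε ≤ |w.2.1 - w.2.2| from hw.2, show |w.2.1 - w.2.2| = 0 by simp [h]]
  obtain ⟨δ, hδ, hle⟩ := hK.exists_forall_le' hcont hpos
  exact ⟨δ, hδ, fun q a b hq₀q hqq₁ ha hb hab =>
    hle (q, a, b) ⟨⟨⟨hq₀q, hqq₁⟩, abs_le.1 ha, abs_le.1 hb⟩, hab⟩⟩

section

variable {Ω : Type*} [MeasurableSpace Ω] {μ : Measure Ω}

lemma eventually_exists_ne_zero_le_measure_inter_lt {ι : Type*} {A : Set Ω} (hA : μ A ≠ 0)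
    {f : ι → Ω → ℝ} (hf : ∀ i, AEMeasurable (fun t => ENNReal.ofReal (f i t)) μ)
    {M : ℝ≥0∞} (hM : M ≠ ∞) (hbd : ∀ i, ∫⁻ t, ENNReal.ofReal (f i t) ∂μ ≤ M) :
    ∀ᶠ R in atTop, ∃ η ≠ 0, ∀ i, η ≤ μ (A ∩ {t | f i t < R}) := by
  have hlim : Tendsto (fun R => M / ENNReal.ofReal R) atTop (𝓝 0) := by
    simpa using ENNReal.Tendsto.const_div ENNReal.tendsto_ofReal_atTop (Or.inr hM)
  filter_upwards [hlim.eventually (gt_mem_nhds (pos_iff_ne_zero.2 hA)), eventually_gt_atTop 0]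
    with R hR hR0
  refine ⟨μ A - M / ENNReal.ofReal R, (tsub_pos_of_lt hR).ne', fun i => ?_⟩
  have hmarkov : μ {t | ENNReal.ofReal R ≤ ENNReal.ofReal (f i t)} ≤ M / ENNReal.ofReal R :=
    (meas_ge_le_lintegral_div (hf i) (by simpa using hR0) ENNReal.ofReal_ne_top).trans
      (ENNReal.div_le_div_right (hbd i) _)
  rw [tsub_le_iff_right]
  calc μ A ≤ μ (A ∩ {t | f i t < R}) + μ (A \ {t | f i t < R}) := measure_le_inter_add_sdiff μ _ _
    _ ≤ μ (A ∩ {t | f i t < R}) + M / ENNReal.ofReal R := by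
      gcongr
      refine (measure_mono fun t ht => ?_).trans hmarkov
      exact ENNReal.ofReal_le_ofReal (not_lt.1 ht.2)

lemma exists_measure_bounded_separated_ne_zero {u v p : Ω → ℝ} (huv : ¬u =ᵐ[μ] v)
    (hp1 : ∀ᵐ t ∂μ, 1 < p t) :
    ∃ C ε q₀ q₁ : ℝ, 0 < ε ∧ 1 < q₀ ∧
      μ {t | |u t| ≤ C ∧ |v t| ≤ C ∧ ε ≤ |u t - v t| ∧ q₀ ≤ p t ∧ p t ≤ q₁} ≠ 0 := by
  by_contra! h
  refine huv ?_
  have hnull : ∀ᵐ t ∂μ, ∀ k : ℕ, ¬(|u t| ≤ k ∧ |v t| ≤ k ∧ 1 / (k + 1 : ℝ) ≤ |u t - v t| ∧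
      1 + 1 / (k + 1 : ℝ) ≤ p t ∧ p t ≤ k) :=
    ae_all_iff.2 fun k => measure_eq_zero_iff_ae_notMem.1 (h _ _ _ _ (by positivity)
      (lt_add_of_pos_right _ (by positivity)))
  filter_upwards [hnull, hp1] with t ht hpt
  by_contra hne
  have hsep : 0 < |u t - v t| := abs_pos.2 (sub_ne_zero.2 hne)
  have hinv := tendsto_one_div_add_atTop_nhds_zero_nat (𝕜 := ℝ)
  obtain ⟨k, hk⟩ := ((tendsto_natCast_atTop_atTop.eventually_ge_atTop |u t|).and <|
    (tendsto_natCast_atTop_atTop.eventually_ge_atTop |v t|).and <|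
    (hinv.eventually (ge_mem_nhds hsep)).and <|
    (hinv.eventually (ge_mem_nhds (sub_pos.2 hpt))).and <|
    tendsto_natCast_atTop_atTop.eventually_ge_atTop (p t)).exists
  exact ht k ⟨hk.1, hk.2.1, hk.2.2.1, by linarith [hk.2.2.2.1], hk.2.2.2.2⟩

lemma exists_ne_zero_le_lintegral_midpointGap {ι : Type*} {p u v : Ω → ℝ} {x : ι → Ω → ℝ}
    (hp : Measurable p) (hu : Measurable u) (hv : Measurable v) (hx : ∀ i, Measurable (x i))
    {M : ℝ≥0∞} (hM : M ≠ ∞) (hbd : ∀ i, ∫⁻ t, ENNReal.ofReal (|x i t| ^ p t) ∂μ ≤ M)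
    {C ε q₀ q₁ : ℝ} (hε : 0 < ε) (hq₀ : 1 < q₀)
    (hA : μ {t | |u t| ≤ C ∧ |v t| ≤ C ∧ ε ≤ |u t - v t| ∧ q₀ ≤ p t ∧ p t ≤ q₁} ≠ 0) :
    ∃ c ≠ 0, ∀ i, c ≤ ∫⁻ t, ENNReal.ofReal (midpointGap (p t) (x i t - u t) (x i t - v t)) ∂μ := by
  obtain ⟨R, ⟨η, hη, hη_le⟩, hR⟩ := ((eventually_exists_ne_zero_le_measure_inter_lt hA
    (fun i => by fun_prop) hM hbd).and (eventually_ge_atTop 1)).exists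
  obtain ⟨δ, hδ, hδ_le⟩ := exists_pos_le_midpointGap hε hq₀ q₁ (R + C)
  refine ⟨ENNReal.ofReal δ * η, mul_ne_zero (by simpa using hδ) hη, fun i => ?_⟩
  have hsub : {t | |u t| ≤ C ∧ |v t| ≤ C ∧ ε ≤ |u t - v t| ∧ q₀ ≤ p t ∧ p t ≤ q₁} ∩
      {t | |x i t| ^ p t < R} ⊆
      {t | ENNReal.ofReal δ ≤ ENNReal.ofReal (midpointGap (p t) (x i t - u t) (x i t - v t))} := by
    rintro t ⟨⟨huC, hvC, hsep, hq₀p, hpq₁⟩, hx_lt⟩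
    have hxR : |x i t| ≤ R := by
      by_contra! h
      linarith [show |x i t| ^ p t < R from hx_lt,
        Real.self_le_rpow_of_one_le (hR.trans h.le) (hq₀.le.trans hq₀p)]
    refine ENNReal.ofReal_le_ofReal (hδ_le _ _ _ hq₀p hpq₁
      ((abs_sub _ _).trans (add_le_add hxR huC)) ((abs_sub _ _).trans (add_le_add hxR hvC)) ?_)
    rwa [sub_sub_sub_cancel_left, abs_sub_comm]
  calc ENNReal.ofReal δ * η
      ≤ ENNReal.ofReal δ * μ {t | ENNReal.ofReal δ ≤
          ENNReal.ofReal (midpointGap (p t) (x i t - u t) (x i t - v t))} := by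
        gcongr
        exact (hη_le i).trans (measure_mono hsub)
    _ ≤ _ := mul_meas_ge_le_lintegral₀ (by unfold midpointGap; fun_prop) _

end

theorem ae_eq_of_modular_midpoint_limit_general
    {Ω : Type*} [MeasurableSpace Ω] (μ : Measure Ω)
    (p : Ω → ℝ) (hp : Measurable p) (hp1 : ∀ᵐ t ∂μ, 1 < p t)
    (u v : Ω → ℝ) (hu : Measurable u) (hv : Measurable v)
    (x : ℕ → Ω → ℝ) (hx : ∀ n, Measurable (x n))
    (M : ℝ≥0∞) (hMfin : M ≠ ⊤)
    (hbd : ∀ n, ∫⁻ t, ENNReal.ofReal (|x n t| ^ p t) ∂μ ≤ M)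
    (hlim : Tendsto (fun n => ∫⁻ t, ENNReal.ofReal
        (|x n t - u t| ^ p t + |x n t - v t| ^ p t
          - 2 * |x n t - (u t + v t) / 2| ^ p t) ∂μ) atTop (nhds 0)) :
    u =ᵐ[μ] v := by
  by_contra huv
  obtain ⟨C, ε, q₀, q₁, hε, hq₀, hA⟩ := exists_measure_bounded_separated_ne_zero huv hp1
  obtain ⟨c, hc, hc_le⟩ :=
    exists_ne_zero_le_lintegral_midpointGap hp hu hv hx hMfin hbd hε hq₀ hA
  simp only [midpointGap_sub_sub] at hc_le
  exact hc (le_zero_iff.1 (ge_of_tendsto' hlim hc_le))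

theorem ae_eq_of_modular_midpoint_limit
    {Ω : Type*} [MeasurableSpace Ω] (μ : Measure Ω) [SigmaFinite μ]
    (p : Ω → ℝ) (hp : Measurable p) (hp1 : ∀ᵐ t ∂μ, 1 < p t)
    (u v : Ω → ℝ) (hu : Measurable u) (hv : Measurable v)
    (x : ℕ → Ω → ℝ) (hx : ∀ n, Measurable (x n))
    (M : ℝ≥0∞) (hMfin : M ≠ ⊤)
    (hbd : ∀ n, ∫⁻ t, ENNReal.ofReal (|x n t| ^ p t) ∂μ ≤ M)
    (hlim : Tendsto (fun n => ∫⁻ t, ENNReal.ofReal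
        (|x n t - u t| ^ p t + |x n t - v t| ^ p t
          - 2 * |x n t - (u t + v t) / 2| ^ p t) ∂μ) atTop (nhds 0)) :
    u =ᵐ[μ] v :=
  ae_eq_of_modular_midpoint_limit_general μ p hp hp1 u v hu hv x hx M hMfin hbd hlim
end

section
/- Let γ > 1, and let x, y be elements of a variable Lebesgue space with disjoint supports, ρ(x) = ρ(y) = 1, and p(t) ≤ γ on supp(x) ∪ supp(y). Then ρ((x+y)/2^{1/γ}) ≥ 1, and hence ‖x+y‖ ≥ 2^{1/γ} in the Luxemburg norm. -/
open MeasureTheory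
open scoped ENNReal

/-- The Luxemburg norm associated to the variable exponent modular
`ρ(g) = ∫ |g(t)|^{p(t)} dμ`. -/
noncomputable def luxemburgNorm {Ω : Type*} [MeasurableSpace Ω]
    (μ : Measure Ω) (p : Ω → ℝ) (g : Ω → ℝ) : ℝ :=
  sInf {α : ℝ | 0 < α ∧ ∫⁻ t, ENNReal.ofReal (|g t / α| ^ p t) ∂μ ≤ 1}

theorem disjoint_sum_modular_lower_bound
    {Ω : Type*} [MeasurableSpace Ω] (μ : Measure Ω) [SigmaFinite μ]
    (p : Ω → ℝ) (hp : Measurable p) (hp1 : ∀ t, 1 ≤ p t)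
    (γ : ℝ) (hγ : 1 < γ)
    (x y : Ω → ℝ) (hx : Measurable x) (hy : Measurable y)
    (hdisj : ∀ t, x t = 0 ∨ y t = 0)
    (hpγ : ∀ t, (x t ≠ 0 ∨ y t ≠ 0) → p t ≤ γ)
    (hρx : ∫⁻ t, ENNReal.ofReal (|x t| ^ p t) ∂μ = 1)
    (hρy : ∫⁻ t, ENNReal.ofReal (|y t| ^ p t) ∂μ = 1) :
    1 ≤ ∫⁻ t, ENNReal.ofReal (|(x t + y t) / 2 ^ (1 / γ)| ^ p t) ∂μ ∧
    (2 : ℝ) ^ (1 / γ) ≤ luxemburgNorm μ p (fun t => x t + y t) := by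
  have hγ0 : (0:ℝ) < γ := lt_trans one_pos hγ
  set β : ℝ := (2:ℝ) ^ (1/γ) with hβdef
  have hβ1 : 1 < β := by
    apply Real.one_lt_rpow_iff_of_pos (by norm_num) |>.mpr
    exact Or.inl ⟨one_lt_two, by positivity⟩
  have hβ0 : (0:ℝ) < β := lt_trans one_pos hβ1
  have hppos : ∀ t, (0:ℝ) < p t := fun t => lt_of_lt_of_le one_pos (hp1 t)
  -- pointwise sum identity
  have hsum : ∀ t, |x t + y t| ^ p t = |x t| ^ p t + |y t| ^ p t := by
    intro t
    rcases hdisj t with h | h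
    · simp [h, Real.zero_rpow (ne_of_gt (hppos t))]
    · simp [h, Real.zero_rpow (ne_of_gt (hppos t))]
  have hmx : Measurable fun t => ENNReal.ofReal (|x t| ^ p t) :=
    Measurable.ennreal_ofReal (hx.abs.pow hp)
  have hρg : ∫⁻ t, ENNReal.ofReal (|x t + y t| ^ p t) ∂μ = 2 := by
    have h1 : ∀ t, ENNReal.ofReal (|x t + y t| ^ p t)
        = ENNReal.ofReal (|x t| ^ p t) + ENNReal.ofReal (|y t| ^ p t) := by
      intro t
      rw [hsum t, ENNReal.ofReal_add (by positivity) (by positivity)]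
    simp only [h1]
    rw [lintegral_add_left hmx, hρx, hρy]
    norm_num
  -- part 1
  have part1 : 1 ≤ ∫⁻ t, ENNReal.ofReal (|(x t + y t) / β| ^ p t) ∂μ := by
    have key : ∀ t, 2⁻¹ * ENNReal.ofReal (|x t + y t| ^ p t)
        ≤ ENNReal.ofReal (|(x t + y t) / β| ^ p t) := by
      intro t
      by_cases hg : x t + y t = 0
      · simp [hg, Real.zero_rpow (ne_of_gt (hppos t))]
      · have hpγt : p t ≤ γ := by
          apply hpγ t
          rcases hdisj t with h | h
          · right; simpa [h] using hg
          · left; simpa [h] using hg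
        have habs : |(x t + y t) / β| ^ p t = |x t + y t| ^ p t / β ^ p t := by
          rw [abs_div, abs_of_pos hβ0, Real.div_rpow (abs_nonneg _) hβ0.le]
        have hβp : β ^ p t ≤ 2 := by
          rw [hβdef, ← Real.rpow_mul (by norm_num : (0:ℝ) ≤ 2)]
          calc (2:ℝ) ^ (1/γ * p t) ≤ (2:ℝ) ^ (1:ℝ) := by
                apply Real.rpow_le_rpow_of_exponent_le one_le_two
                rw [div_mul_eq_mul_div, one_mul, div_le_one hγ0]
                exact hpγt
            _ = 2 := Real.rpow_one 2
        have hdiv : |x t + y t| ^ p t / 2 ≤ |x t + y t| ^ p t / β ^ p t :=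
          div_le_div_of_nonneg_left (by positivity) (by positivity) hβp
        calc 2⁻¹ * ENNReal.ofReal (|x t + y t| ^ p t)
            = ENNReal.ofReal (|x t + y t| ^ p t / 2) := by
              rw [ENNReal.ofReal_div_of_pos two_pos]
              simp [ENNReal.div_eq_inv_mul]
          _ ≤ ENNReal.ofReal (|(x t + y t) / β| ^ p t) := by
              rw [habs]; exact ENNReal.ofReal_le_ofReal hdiv
    calc (1:ℝ≥0∞) = 2⁻¹ * ∫⁻ t, ENNReal.ofReal (|x t + y t| ^ p t) ∂μ := by
          rw [hρg]; exact (ENNReal.inv_mul_cancel (by norm_num) (by norm_num)).symm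
      _ = ∫⁻ t, 2⁻¹ * ENNReal.ofReal (|x t + y t| ^ p t) ∂μ :=
          (lintegral_const_mul' _ _ (by norm_num)).symm
      _ ≤ _ := lintegral_mono key
  refine ⟨part1, ?_⟩
  -- part 2
  unfold luxemburgNorm
  apply le_csInf
  · refine ⟨2, by norm_num, ?_⟩
    have key2 : ∀ t, ENNReal.ofReal (|x t + y t| ^ p t / 2)
        = 2⁻¹ * ENNReal.ofReal (|x t + y t| ^ p t) := by
      intro t
      rw [ENNReal.ofReal_div_of_pos two_pos]
      simp [ENNReal.div_eq_inv_mul]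
    have key : ∀ t, ENNReal.ofReal (|(x t + y t) / 2| ^ p t)
        ≤ 2⁻¹ * ENNReal.ofReal (|x t + y t| ^ p t) := by
      intro t
      rw [← key2 t]
      apply ENNReal.ofReal_le_ofReal
      rw [abs_div, abs_two, Real.div_rpow (abs_nonneg _) (by norm_num)]
      refine div_le_div_of_nonneg_left (by positivity) (by norm_num) ?_
      calc (2:ℝ) = 2 ^ (1:ℝ) := (Real.rpow_one 2).symm
        _ ≤ 2 ^ p t := Real.rpow_le_rpow_of_exponent_le one_le_two (hp1 t)
    calc ∫⁻ t, ENNReal.ofReal (|(x t + y t) / 2| ^ p t) ∂μ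
        ≤ ∫⁻ t, 2⁻¹ * ENNReal.ofReal (|x t + y t| ^ p t) ∂μ := lintegral_mono key
      _ = 2⁻¹ * ∫⁻ t, ENNReal.ofReal (|x t + y t| ^ p t) ∂μ :=
          lintegral_const_mul' _ _ (by norm_num)
      _ = 1 := by rw [hρg]; exact ENNReal.inv_mul_cancel (by norm_num) (by norm_num)
  · rintro α ⟨hα0, hαρ⟩
    by_contra hlt
    push_neg at hlt
    set c : ℝ := β / α with hcdef
    have hc1 : 1 < c := (one_lt_div hα0).mpr hlt
    have key : ∀ t, ENNReal.ofReal c * ENNReal.ofReal (|(x t + y t) / β| ^ p t)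
        ≤ ENNReal.ofReal (|(x t + y t) / α| ^ p t) := by
      intro t
      rw [← ENNReal.ofReal_mul (by positivity)]
      apply ENNReal.ofReal_le_ofReal
      have h1 : |(x t + y t) / α| = c * |(x t + y t) / β| := by
        rw [abs_div, abs_div, abs_of_pos hα0, abs_of_pos hβ0, hcdef]
        field_simp
      rw [h1, Real.mul_rpow (by positivity) (abs_nonneg _)]
      refine mul_le_mul_of_nonneg_right ?_ (by positivity)
      calc c = c ^ (1:ℝ) := (Real.rpow_one c).symm
        _ ≤ c ^ p t := Real.rpow_le_rpow_of_exponent_le hc1.le (hp1 t)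
    have hint : ENNReal.ofReal c * ∫⁻ t, ENNReal.ofReal (|(x t + y t) / β| ^ p t) ∂μ
        ≤ 1 := by
      calc ENNReal.ofReal c * ∫⁻ t, ENNReal.ofReal (|(x t + y t) / β| ^ p t) ∂μ
          = ∫⁻ t, ENNReal.ofReal c * ENNReal.ofReal (|(x t + y t) / β| ^ p t) ∂μ :=
            (lintegral_const_mul' _ _ ENNReal.ofReal_ne_top).symm
        _ ≤ ∫⁻ t, ENNReal.ofReal (|(x t + y t) / α| ^ p t) ∂μ := lintegral_mono key
        _ ≤ 1 := hαρ
    have : ENNReal.ofReal c ≤ 1 := by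
      calc ENNReal.ofReal c = ENNReal.ofReal c * 1 := (mul_one _).symm
        _ ≤ ENNReal.ofReal c * ∫⁻ t, ENNReal.ofReal (|(x t + y t) / β| ^ p t) ∂μ :=
            mul_le_mul_right part1 _
        _ ≤ 1 := hint
    rw [ENNReal.ofReal_le_one] at this
    linarith
end

section
/- Let (Ω,Σ,μ) be a σ-finite measure space and p: Ω → [1,∞) measurable with ess sup p = +∞. Then there exists a strictly increasing real sequence (p_n) with p_n → ∞ such that μ(p⁻¹([p_n, p_{n+1}))) > 0 and (1 + 1/n)^{p_n} > 2ⁿ for all n. -/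
open MeasureTheory Filter

/-- The sets `{a ≤ p < b}` increase to `{a ≤ p} ⊇ {a < p}` as `b → ∞`; continuity from below. -/
theorem eventually_pos_measure_Ico_of_pos_measure_Ioi {Ω : Type*} [MeasurableSpace Ω]
    {μ : Measure Ω} {p : Ω → ℝ} {a : ℝ} (h : 0 < μ {t | a < p t}) :
    ∀ᶠ b in atTop, 0 < μ {t | a ≤ p t ∧ p t < b} := by
  have hmono : Monotone fun b : ℝ => {t | a ≤ p t ∧ p t < b} :=
    fun _ _ hb _ ht => ⟨ht.1, ht.2.trans_le hb⟩
  have hUnion : ⋃ b : ℝ, {t | a ≤ p t ∧ p t < b} = {t | a ≤ p t} := by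
    ext t
    simp only [Set.mem_iUnion, Set.mem_ofPred_eq]
    exact ⟨fun ⟨_, ht⟩ => ht.1, fun ht => ⟨p t + 1, ht, lt_add_one _⟩⟩
  have hlim := tendsto_measure_iUnion_atTop (μ := μ) hmono
  rw [hUnion] at hlim
  exact hlim.eventually_const_lt (h.trans_le (measure_mono fun t (ht : a < p t) => ht.le))

theorem exists_strictMono_tendsto_atTop_of_eventually {P : ℕ → ℝ → ℝ → Prop}
    (h : ∀ n a, ∀ᶠ b in atTop, P n a b) :
    ∃ q : ℕ → ℝ, StrictMono q ∧ Tendsto q atTop atTop ∧ ∀ n, P n (q n) (q (n + 1)) := by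
  choose F hF using fun n a => ((h n a).and (eventually_ge_atTop (a + 1))).exists
  let q : ℕ → ℝ := fun n => Nat.rec 0 (fun n a => F n a) n
  have hstep : ∀ n, q n + 1 ≤ q (n + 1) := fun n => (hF n (q n)).2
  have hge : ∀ n : ℕ, (n : ℝ) ≤ q n := by
    intro n
    induction n with
    | zero => exact Nat.cast_zero.le
    | succ n ih => push_cast; linarith [hstep n]
  exact ⟨q, strictMono_nat_of_lt_succ fun n => by linarith [hstep n],
    tendsto_atTop_mono hge tendsto_natCast_atTop_atTop, fun n => (hF n (q n)).1⟩

theorem exists_exponent_sequence_of_unbounded_p_general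
    {Ω : Type*} [MeasurableSpace Ω] (μ : Measure Ω)
    (p : Ω → ℝ)
    (hunb : ∀ M : ℝ, 0 < μ {t | M < p t}) :
    ∃ q : ℕ → ℝ, StrictMono q ∧ Tendsto q atTop atTop ∧
      (∀ n : ℕ, 1 ≤ n → 0 < μ {t | q n ≤ p t ∧ p t < q (n + 1)}) ∧
      (∀ n : ℕ, 1 ≤ n → (2 : ℝ) ^ n < (1 + 1 / (n : ℝ)) ^ q n) := by
  have hpow : ∀ n : ℕ, ∀ᶠ x : ℝ in atTop, (2 : ℝ) ^ (n + 1) < (1 + 1 / ((n + 1 : ℕ) : ℝ)) ^ x :=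
    fun n => (tendsto_rpow_atTop_of_base_gt_one _
      (lt_add_of_pos_right 1 (by positivity))).eventually_gt_atTop _
  -- The bound on `2 ^ (n + 1)` is imposed on `q (n + 1)`, the right end of the `n`-th step.
  obtain ⟨q, hmono, htend, hq⟩ := exists_strictMono_tendsto_atTop_of_eventually
    fun n a => (eventually_pos_measure_Ico_of_pos_measure_Ioi (hunb a)).and (hpow n)
  refine ⟨q, hmono, htend, fun n _ => (hq n).1, fun n hn => ?_⟩
  obtain ⟨m, rfl⟩ := Nat.exists_eq_add_of_le' hn
  exact (hq m).2

theorem exists_exponent_sequence_of_unbounded_p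
    {Ω : Type*} [MeasurableSpace Ω] (μ : Measure Ω) [SigmaFinite μ]
    (p : Ω → ℝ) (hp : Measurable p) (hp1 : ∀ t, 1 ≤ p t)
    (hunb : ∀ M : ℝ, 0 < μ {t | M < p t}) :
    ∃ q : ℕ → ℝ, StrictMono q ∧ Tendsto q atTop atTop ∧
      (∀ n : ℕ, 1 ≤ n → 0 < μ {t | q n ≤ p t ∧ p t < q (n + 1)}) ∧
      (∀ n : ℕ, 1 ≤ n → (2 : ℝ) ^ n < (1 + 1 / (n : ℝ)) ^ q n) :=
  exists_exponent_sequence_of_unbounded_p_general μ p hunb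
end

section
/- Let (S_j) be a sequence of pairwise disjoint measurable sets with 0 < μ(S_j) < ∞, and let p: Ω → [1,∞) satisfy p(t) ≥ p_j on S_j, where (1+1/j)^{p_j} > 2ʲ. For fixed n, set x_j = 1/(2^{n+1+j} μ(S_j)) and f(t) = Σ_j x_j^{1/p(t)} χ_{S_j}(t). Then ρ(f) = 2^{−(n+1)} and ρ(λf) = +∞ for every λ > 1; consequently ‖f‖ = 1 in the Luxemburg norm. -/
/-!
On `S_j` we have `|λ f(t)|^{p(t)} = λ^{p(t)} x_j`, so
`ρ(f) = Σ x_j μ(S_j) = Σ 2^{-(n+2+j)} = 2^{-(n+1)}`. For `λ > 1` we eventually have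
`1 + 1/(j+1) ≤ λ`, and then the growth condition on `p_j` gives `λ^{p(t)} > 2^{j+1}` on `S_j`:
every late block contributes at least `2^{j+1} x_j μ(S_j) = 2^{-(n+1)}` to `ρ(λ f)`, which
therefore diverges. A function with `ρ(f) ≤ 1 < ρ(λ f)` for all `λ > 1` has Luxemburg norm `1`.
-/

open MeasureTheory
open scoped ENNReal

open Filter Set

namespace Real

theorem abs_mul_rpow_one_div_rpow {l c q : ℝ} (hl : 0 ≤ l) (hc : 0 ≤ c) (hq : q ≠ 0) :
    |l * c ^ (1 / q)| ^ q = l ^ q * c := by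
  rw [abs_of_nonneg (by positivity), mul_rpow hl (by positivity), one_div, rpow_inv_rpow hc hq]

theorem lt_rpow_of_lt_rpow_of_le {b l q r c : ℝ} (hb : 1 ≤ b) (hc : 1 ≤ c) (h : c < b ^ q)
    (hbl : b ≤ l) (hqr : q ≤ r) : c < l ^ r := by
  have hq : 0 ≤ q := by
    by_contra! hq
    linarith [rpow_le_one_of_one_le_of_nonpos hb hq.le]
  calc c < b ^ q := h
    _ ≤ l ^ q := rpow_le_rpow (by linarith) hbl hq
    _ ≤ l ^ r := rpow_le_rpow_of_exponent_le (hb.trans hbl) hqr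

end Real

theorem eventually_one_add_one_div_le {l : ℝ} (hl : 1 < l) :
    ∀ᶠ j : ℕ in atTop, 1 + 1 / ((j : ℝ) + 1) ≤ l := by
  filter_upwards [tendsto_one_div_add_atTop_nhds_zero_nat.eventually (gt_mem_nhds (sub_pos.2 hl))]
    with j hj
  linarith

theorem ENNReal.ofReal_div_toReal_mul {m : ℝ≥0∞} (h0 : m ≠ 0) (htop : m ≠ ⊤) (a : ℝ) :
    ENNReal.ofReal (a / m.toReal) * m = ENNReal.ofReal a := by
  have hm : 0 < m.toReal := ENNReal.toReal_pos h0 htop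
  nth_rw 2 [← ENNReal.ofReal_toReal htop]
  rw [← ENNReal.ofReal_mul' hm.le, div_mul_cancel₀ a hm.ne']

theorem ENNReal.tsum_ofReal_one_div_two_pow_add (n : ℕ) :
    ∑' j : ℕ, ENNReal.ofReal (1 / 2 ^ (n + 2 + j)) = ENNReal.ofReal (1 / 2 ^ (n + 1)) := by
  rw [← tsum_geometric_two' (1 / 2 ^ (n + 1)),
    ENNReal.ofReal_tsum_of_nonneg (fun j => by positivity) (summable_geometric_two' _)]
  exact tsum_congr fun j => congrArg ENNReal.ofReal (by ring)

theorem ENNReal.tsum_eq_top_of_eventually_le {a : ℕ → ℝ≥0∞} {c : ℝ≥0∞} (hc : c ≠ 0)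
    (h : ∀ᶠ j in atTop, c ≤ a j) : ∑' j, a j = ⊤ := by
  by_contra htop
  have hsmall := (ENNReal.tendsto_atTop_zero_of_tsum_ne_top htop).eventually (gt_mem_nhds hc.bot_lt)
  obtain ⟨j, hj, hlt⟩ := (h.and hsmall).exists
  exact (hj.trans_lt hlt).false

theorem tsum_indicator_apply_of_mem {Ω β : Type*} [AddCommMonoid β] [TopologicalSpace β]
    {S : ℕ → Set Ω} (hS : Pairwise (Function.onFun Disjoint S)) {g : ℕ → Ω → β} {j : ℕ} {t : Ω}
    (ht : t ∈ S j) : ∑' i, (S i).indicator (g i) t = g j t := by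
  rw [tsum_eq_single j fun i hij => indicator_of_notMem (disjoint_right.1 (hS hij) ht) _,
    indicator_of_mem ht]

theorem tsum_indicator_apply_of_notMem {Ω β : Type*} [AddCommMonoid β] [TopologicalSpace β]
    {S : ℕ → Set Ω} {g : ℕ → Ω → β} {t : Ω} (ht : t ∉ ⋃ j, S j) :
    ∑' i, (S i).indicator (g i) t = 0 := by
  simp_all [indicator_of_notMem]

noncomputable def modular {Ω : Type*} [MeasurableSpace Ω] (μ : Measure Ω) (p g : Ω → ℝ) : ℝ≥0∞ :=
  ∫⁻ t, ENNReal.ofReal (|g t| ^ p t) ∂μ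

theorem luxemburgNorm_eq_one_of_modular {Ω : Type*} [MeasurableSpace Ω] {μ : Measure Ω}
    {p g : Ω → ℝ} (hle : modular μ p g ≤ 1)
    (hgt : ∀ l : ℝ, 1 < l → 1 < modular μ p (fun t => l * g t)) : luxemburgNorm μ p g = 1 := by
  have hone : (1 : ℝ) ∈ {α : ℝ | 0 < α ∧ ∫⁻ t, ENNReal.ofReal (|g t / α| ^ p t) ∂μ ≤ 1} :=
    ⟨one_pos, by simpa only [modular, div_one] using hle⟩
  refine le_antisymm (csInf_le ⟨0, fun α hα => hα.1.le⟩ hone) (le_csInf ⟨1, hone⟩ ?_)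
  rintro α ⟨hα, hαle⟩
  by_contra! hα1
  have hgt' := hgt α⁻¹ ((one_lt_inv₀ hα).2 hα1)
  simp only [modular, inv_mul_eq_div] at hgt'
  exact (hαle.trans_lt hgt').false

section Blocks

variable {Ω : Type*} [MeasurableSpace Ω] {μ : Measure Ω} {S : ℕ → Set Ω} {p f : Ω → ℝ}
  {c : ℕ → ℝ}

theorem lintegral_eq_tsum_setLIntegral (hSm : ∀ j, MeasurableSet (S j))
    (hS : Pairwise (Function.onFun Disjoint S)) {F : Ω → ℝ≥0∞}
    (hF : F.support ⊆ ⋃ j, S j) : ∫⁻ t, F t ∂μ = ∑' j, ∫⁻ t in S j, F t ∂μ := by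
  rw [← lintegral_iUnion hSm hS, setLIntegral_eq_of_support_subset hF]

theorem lintegral_eq_top_of_eventually_le_setLIntegral (hSm : ∀ j, MeasurableSet (S j))
    (hS : Pairwise (Function.onFun Disjoint S)) {F : Ω → ℝ≥0∞} {a : ℝ≥0∞} (ha : a ≠ 0)
    (h : ∀ᶠ j in atTop, a ≤ ∫⁻ t in S j, F t ∂μ) : ∫⁻ t, F t ∂μ = ⊤ := by
  refine top_le_iff.1 ?_
  calc ⊤ = ∑' j, ∫⁻ t in S j, F t ∂μ := (ENNReal.tsum_eq_top_of_eventually_le ha h).symm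
    _ = ∫⁻ t in ⋃ j, S j, F t ∂μ := (lintegral_iUnion hSm hS F).symm
    _ ≤ ∫⁻ t, F t ∂μ := setLIntegral_le_lintegral _ F

theorem modular_eq_tsum_of_eq_on_blocks (hSm : ∀ j, MeasurableSet (S j))
    (hS : Pairwise (Function.onFun Disjoint S)) (hp : ∀ t, p t ≠ 0) (hc : ∀ j, 0 ≤ c j)
    (hf : ∀ j, ∀ t ∈ S j, f t = c j ^ (1 / p t)) (hf0 : ∀ t ∉ ⋃ j, S j, f t = 0) :
    modular μ p f = ∑' j, ENNReal.ofReal (c j) * μ (S j) := by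
  have hsupp : (fun t => ENNReal.ofReal (|f t| ^ p t)).support ⊆ ⋃ j, S j := by
    intro t ht
    by_contra hout
    simp [hf0 t hout, Real.zero_rpow (hp t)] at ht
  rw [modular, lintegral_eq_tsum_setLIntegral hSm hS hsupp]
  refine tsum_congr fun j => ?_
  rw [← setLIntegral_const]
  refine setLIntegral_congr_fun (hSm j) fun t ht => ?_
  rw [hf j t ht, ← one_mul (c j ^ _), Real.abs_mul_rpow_one_div_rpow zero_le_one (hc j) (hp t),
    Real.one_rpow, one_mul]

theorem modular_mul_eq_top_of_eq_on_blocks (hSm : ∀ j, MeasurableSet (S j))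
    (hS : Pairwise (Function.onFun Disjoint S)) (hp : ∀ t, p t ≠ 0) (hc : ∀ j, 0 ≤ c j)
    (hf : ∀ j, ∀ t ∈ S j, f t = c j ^ (1 / p t)) {l : ℝ} (hl : 0 ≤ l) {b : ℕ → ℝ}
    {a : ℝ≥0∞} (ha : a ≠ 0)
    (hb : ∀ᶠ j in atTop, (∀ t ∈ S j, b j ≤ l ^ p t) ∧ a ≤ ENNReal.ofReal (b j * c j) * μ (S j)) :
    modular μ p (fun t => l * f t) = ⊤ := by
  refine lintegral_eq_top_of_eventually_le_setLIntegral hSm hS ha (hb.mono fun j hj => ?_)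
  calc a ≤ ENNReal.ofReal (b j * c j) * μ (S j) := hj.2
    _ = ∫⁻ t in S j, ENNReal.ofReal (b j * c j) ∂μ := (setLIntegral_const _ _).symm
    _ ≤ _ := setLIntegral_mono' (hSm j) fun t ht => ?_
  dsimp only
  rw [hf j t ht, Real.abs_mul_rpow_one_div_rpow hl (hc j) (hp t)]
  exact ENNReal.ofReal_le_ofReal (mul_le_mul_of_nonneg_right (hj.1 t ht) (hc j))

end Blocks

/-- `S j` is the paper's `S_{j+1}` (the paper indexes the blocks from `1`), so `x j` is its
`x_{n,j+1}`. -/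
theorem modular_value_and_norm_one_of_block_general
    {Ω : Type*} [MeasurableSpace Ω] (μ : Measure Ω)
    (p : Ω → ℝ) (hp1 : ∀ t, 1 ≤ p t)
    (S : ℕ → Set Ω) (hSm : ∀ j, MeasurableSet (S j))
    (hSdisj : Pairwise (Function.onFun Disjoint S))
    (hSpos : ∀ j, 0 < μ (S j)) (hSfin : ∀ j, μ (S j) < ⊤)
    (pj : ℕ → ℝ)
    (hplow : ∀ j, ∀ t ∈ S j, pj j ≤ p t)
    (hpgrowth : ∀ j : ℕ, (2 : ℝ) ^ (j + 1) < (1 + 1 / ((j : ℝ) + 1)) ^ pj j)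
    (n : ℕ) (x : ℕ → ℝ)
    (hxdef : ∀ j, x j = 1 / (2 ^ (n + 2 + j) * (μ (S j)).toReal))
    (f : Ω → ℝ)
    (hfdef : ∀ t, f t = ∑' j, Set.indicator (S j) (fun s => x j ^ (1 / p s)) t) :
    (∫⁻ t, ENNReal.ofReal (|f t| ^ p t) ∂μ = ENNReal.ofReal (1 / 2 ^ (n + 1))) ∧
    (∀ l : ℝ, 1 < l → ∫⁻ t, ENNReal.ofReal (|l * f t| ^ p t) ∂μ = ⊤) ∧
    luxemburgNorm μ p f = 1 := by
  have hp : ∀ t, p t ≠ 0 := fun t => (one_pos.trans_le (hp1 t)).ne'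
  have hx : ∀ j, 0 ≤ x j := fun j => by rw [hxdef]; positivity
  have hf : ∀ j, ∀ t ∈ S j, f t = x j ^ (1 / p t) := fun j t ht =>
    (hfdef t).trans (tsum_indicator_apply_of_mem hSdisj ht)
  have hf0 : ∀ t ∉ ⋃ j, S j, f t = 0 := fun t ht =>
    (hfdef t).trans (tsum_indicator_apply_of_notMem ht)
  have hmass : ∀ (a : ℝ) j, ENNReal.ofReal (a * x j) * μ (S j) =
      ENNReal.ofReal (a / 2 ^ (n + 2 + j)) := fun a j => by
    rw [hxdef, show a * (1 / (2 ^ (n + 2 + j) * (μ (S j)).toReal)) =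
      a / 2 ^ (n + 2 + j) / (μ (S j)).toReal by ring]
    exact ENNReal.ofReal_div_toReal_mul (hSpos j).ne' (hSfin j).ne _
  have hρ : modular μ p f = ENNReal.ofReal (1 / 2 ^ (n + 1)) := by
    rw [modular_eq_tsum_of_eq_on_blocks hSm hSdisj hp hx hf hf0,
      ← ENNReal.tsum_ofReal_one_div_two_pow_add]
    exact tsum_congr fun j => by rw [← one_mul (x j), hmass]
  have hgrowth : ∀ l : ℝ, 1 < l → ∀ᶠ j in atTop, ∀ t ∈ S j, (2 : ℝ) ^ (j + 1) ≤ l ^ p t :=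
    fun l hl => (eventually_one_add_one_div_le hl).mono fun j hj t ht =>
      (Real.lt_rpow_of_lt_rpow_of_le (le_add_of_nonneg_right (by positivity))
        (one_le_pow₀ one_le_two) (hpgrowth j) hj (hplow j t ht)).le
  have hblock : ∀ j, ENNReal.ofReal (2 ^ (j + 1) * x j) * μ (S j) =
      ENNReal.ofReal (1 / 2 ^ (n + 1)) := fun j => by
    rw [hmass]
    congr 1
    field_simp
    ring
  have hρl : ∀ l : ℝ, 1 < l → modular μ p (fun t => l * f t) = ⊤ := fun l hl =>
    modular_mul_eq_top_of_eq_on_blocks hSm hSdisj hp hx hf (by linarith)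
      (ENNReal.ofReal_pos.2 (by positivity)).ne'
      ((hgrowth l hl).mono fun j hj => ⟨hj, (hblock j).ge⟩)
  have hρ_le : modular μ p f ≤ 1 := hρ.trans_le <|
    ENNReal.ofReal_le_one.2 (div_le_one_of_le₀ (one_le_pow₀ one_le_two) (by positivity))
  exact ⟨hρ, hρl, luxemburgNorm_eq_one_of_modular hρ_le
    fun l hl => (hρl l hl).symm ▸ ENNReal.one_lt_top⟩

/-- The building block of the isometric copy of `ℓ∞` in `L^{p(·)}(Ω)`.
Here `S j` plays the role of the set `S_{r_n^{j+1}}` of the paper (the index `j`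
runs from `1` in the paper, hence the shifts `j+1`), `x j` is the constant
`x_{n,j+1} = 1/(2^{n+1+(j+1)} μ(S_{j+1}))` and `f(t) = Σ_j x_j^{1/p(t)} χ_{S_j}(t)`. -/
theorem modular_value_and_norm_one_of_block
    {Ω : Type*} [MeasurableSpace Ω] (μ : Measure Ω) [SigmaFinite μ]
    (p : Ω → ℝ) (hp : Measurable p) (hp1 : ∀ t, 1 ≤ p t)
    (S : ℕ → Set Ω) (hSm : ∀ j, MeasurableSet (S j))
    (hSdisj : Pairwise (Function.onFun Disjoint S))
    (hSpos : ∀ j, 0 < μ (S j)) (hSfin : ∀ j, μ (S j) < ⊤)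
    (pj : ℕ → ℝ)
    (hplow : ∀ j, ∀ t ∈ S j, pj j ≤ p t)
    (hpgrowth : ∀ j : ℕ, (2 : ℝ) ^ (j + 1) < (1 + 1 / ((j : ℝ) + 1)) ^ pj j)
    (n : ℕ) (x : ℕ → ℝ)
    (hxdef : ∀ j, x j = 1 / (2 ^ (n + 2 + j) * (μ (S j)).toReal))
    (f : Ω → ℝ)
    (hfdef : ∀ t, f t = ∑' j, Set.indicator (S j) (fun s => x j ^ (1 / p s)) t) :
    (∫⁻ t, ENNReal.ofReal (|f t| ^ p t) ∂μ = ENNReal.ofReal (1 / 2 ^ (n + 1))) ∧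
    (∀ l : ℝ, 1 < l → ∫⁻ t, ENNReal.ofReal (|l * f t| ^ p t) ∂μ = ⊤) ∧
    luxemburgNorm μ p f = 1 :=
  modular_value_and_norm_one_of_block_general μ p hp1 S hSm hSdisj hSpos hSfin pj hplow hpgrowth n x
    hxdef f hfdef
end

section
/- Let X be a Banach space, (z_n) a sequence spanning an asymptotically isometric copy of ℓ₁ with parameters (ε_n), and (u_n) a sequence with ‖u_n‖ ≤ 1 and ‖z_n − u_n‖ → 0. Then, after discarding finitely many terms, (u_n) spans an asymptotically isometric copy of ℓ₁. -/
/-!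
A unit vector test shows `‖z n‖ ≤ 1`. Discarding the first `N` terms of an asymptotically isometric
`ℓ₁` sequence leaves one with parameters `ε (n + N)`, and replacing `z n` by `u n` costs at most
`‖z n - u n‖` in the lower estimate, by the triangle inequality. So `u (n + N)` satisfies the
estimates with `ε' n = ε (n + N) + ‖z (n + N) - u (n + N)‖`, which tends to `0` and, for `N`
large, lies in `(0, 1)`.
-/

open Filter

section

variable {X : Type*} [NormedAddCommGroup X] [NormedSpace ℝ X]

/-- Only the two estimates; the conditions `ε n ∈ (0, 1)` and `ε → 0` are stated separately. -/
def AsympIsometricL1Bounds (ε : ℕ → ℝ) (z : ℕ → X) : Prop :=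
  ∀ t : ℕ → ℝ, Summable (fun n => |t n|) →
    (∑' n, (1 - ε n) * |t n|) ≤ ‖∑' n, t n • z n‖ ∧ ‖∑' n, t n • z n‖ ≤ ∑' n, |t n|

lemma norm_smul_le_abs_of_norm_le_one {x : X} (hx : ‖x‖ ≤ 1) (a : ℝ) : ‖a • x‖ ≤ |a| := by
  rw [norm_smul, Real.norm_eq_abs]
  exact mul_le_of_le_one_right (abs_nonneg a) hx

lemma norm_tsum_smul_le_of_norm_le_one {u : ℕ → X} (hu : ∀ n, ‖u n‖ ≤ 1) {t : ℕ → ℝ}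
    (ht : Summable (fun n => |t n|)) : ‖∑' n, t n • u n‖ ≤ ∑' n, |t n| := by
  have hbound (n : ℕ) : ‖t n • u n‖ ≤ |t n| := norm_smul_le_abs_of_norm_le_one (hu n) (t n)
  have hnorm : Summable (fun n => ‖t n • u n‖) := ht.of_nonneg_of_le (fun _ => norm_nonneg _) hbound
  exact (norm_tsum_le_tsum_norm hnorm).trans (hnorm.tsum_le_tsum hbound ht)

section ShiftExtend

variable {α M : Type*} [Zero α] [AddCommMonoid M]

lemma apply_extend_add_right_eq_zero_of_notMem_range {F : ℕ → α → M} (hF : ∀ n, F n 0 = 0)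
    (t : ℕ → α) (N : ℕ) {n : ℕ} (hn : n ∉ Set.range (· + N)) :
    F n (Function.extend (· + N) t 0 n) = 0 := by
  rw [Function.extend_apply' _ _ _ hn, Pi.zero_apply, hF]

variable [TopologicalSpace M]

lemma tsum_apply_extend_add_right {F : ℕ → α → M} (hF : ∀ n, F n 0 = 0) (t : ℕ → α) (N : ℕ) :
    ∑' n, F n (Function.extend (· + N) t 0 n) = ∑' n, F (n + N) (t n) := by
  rw [← (add_left_injective N).tsum_eq]
  · simp only [(add_left_injective N).extend_apply]
  · intro n hn
    by_contra hrange
    exact hn (apply_extend_add_right_eq_zero_of_notMem_range hF t N hrange)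

lemma summable_apply_extend_add_right_iff {F : ℕ → α → M} (hF : ∀ n, F n 0 = 0) (t : ℕ → α)
    (N : ℕ) :
    Summable (fun n => F n (Function.extend (· + N) t 0 n)) ↔
      Summable (fun n => F (n + N) (t n)) := by
  rw [← (add_left_injective N).summable_iff
    (fun n hn => apply_extend_add_right_eq_zero_of_notMem_range hF t N hn)]
  simp only [Function.comp_def, (add_left_injective N).extend_apply]

end ShiftExtend

namespace AsympIsometricL1Bounds

variable {ε : ℕ → ℝ} {z : ℕ → X}

lemma norm_le_one (h : AsympIsometricL1Bounds ε z) (k : ℕ) : ‖z k‖ ≤ 1 := by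
  classical
  set e : ℕ → ℝ := Pi.single k 1
  have habs : (fun n => |e n|) = e :=
    funext fun n => abs_of_nonneg ((Pi.single_nonneg.mpr zero_le_one : 0 ≤ e) n)
  have hsummable : Summable (fun n => |e n|) :=
    habs ▸ summable_of_ne_finset_zero (s := {k}) (fun n hn => by simp_all [e])
  have hupper := (h e hsummable).2
  rw [habs, tsum_pi_single] at hupper
  simpa [e, Pi.single_apply] using hupper

/-- Coefficients of the shifted sequence are padded with `N` leading zeros. -/
lemma comp_add_right (h : AsympIsometricL1Bounds ε z) (N : ℕ) :
    AsympIsometricL1Bounds (fun n => ε (n + N)) (fun n => z (n + N)) := by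
  intro t ht
  set s := Function.extend (· + N) t 0
  have hs : Summable (fun n => |s n|) :=
    (summable_apply_extend_add_right_iff (F := fun _ a => |a|) (fun _ => abs_zero) t N).mpr ht
  have hsum : ∑' n, s n • z n = ∑' n, t n • z (n + N) :=
    tsum_apply_extend_add_right (F := fun n a => a • z n) (fun _ => zero_smul ℝ _) t N
  have hweight : ∑' n, (1 - ε n) * |s n| = ∑' n, (1 - ε (n + N)) * |t n| :=
    tsum_apply_extend_add_right (F := fun n a => (1 - ε n) * |a|) (fun _ => by simp) t N
  have hl1 : ∑' n, |s n| = ∑' n, |t n| :=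
    tsum_apply_extend_add_right (F := fun _ a => |a|) (fun _ => abs_zero) t N
  simpa only [hsum, hweight, hl1] using h s hs

lemma add_norm_sub [CompleteSpace X] (h : AsympIsometricL1Bounds ε z)
    (hε : ∀ n, ε n ∈ Set.Ioo (0 : ℝ) 1) {u : ℕ → X} (hu : ∀ n, ‖u n‖ ≤ 1) :
    AsympIsometricL1Bounds (fun n => ε n + ‖z n - u n‖) u := by
  intro t ht
  refine ⟨?_, norm_tsum_smul_le_of_norm_le_one hu ht⟩
  have hz := h.norm_le_one
  have htz : Summable (fun n => t n • z n) :=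
    ht.of_norm_bounded fun n => norm_smul_le_abs_of_norm_le_one (hz n) (t n)
  have htu : Summable (fun n => t n • u n) :=
    ht.of_norm_bounded fun n => norm_smul_le_abs_of_norm_le_one (hu n) (t n)
  have hweight : Summable (fun n => (1 - ε n) * |t n|) :=
    ht.of_nonneg_of_le
      (fun n => mul_nonneg (sub_nonneg.mpr (hε n).2.le) (abs_nonneg _))
      (fun n => mul_le_of_le_one_left (abs_nonneg _) (by linarith [(hε n).1]))
  have hdist (n : ℕ) : ‖z n - u n‖ ≤ 2 := by
    linarith [norm_sub_le (z n) (u n), hz n, hu n]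
  have hdefect : Summable (fun n => ‖z n - u n‖ * |t n|) :=
    (ht.mul_left 2).of_nonneg_of_le (fun n => by positivity)
      (fun n => mul_le_mul_of_nonneg_right (hdist n) (abs_nonneg _))
  have hnorm (n : ℕ) : ‖t n • (z n - u n)‖ = ‖z n - u n‖ * |t n| := by
    rw [norm_smul, Real.norm_eq_abs, mul_comm]
  have hdefect_le : ‖∑' n, t n • (z n - u n)‖ ≤ ∑' n, ‖z n - u n‖ * |t n| := by
    refine (norm_tsum_le_tsum_norm ?_).trans_eq (tsum_congr hnorm)
    simpa only [hnorm] using hdefect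
  have hsplit : ∑' n, t n • (z n - u n) = ∑' n, t n • z n - ∑' n, t n • u n := by
    simp only [smul_sub]
    exact htz.tsum_sub htu
  calc ∑' n, (1 - (ε n + ‖z n - u n‖)) * |t n|
      = ∑' n, (1 - ε n) * |t n| - ∑' n, ‖z n - u n‖ * |t n| := by
        rw [← hweight.tsum_sub hdefect]
        exact tsum_congr fun n => by ring
    _ ≤ ‖∑' n, t n • z n‖ - ‖∑' n, t n • (z n - u n)‖ := sub_le_sub (h t ht).1 hdefect_le
    _ ≤ ‖∑' n, t n • u n‖ := by
        rw [hsplit]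
        linarith [norm_sub_norm_le (∑' n, t n • z n) (∑' n, t n • u n)]

end AsympIsometricL1Bounds

end

theorem aic_l1_perturbation
    {X : Type*} [NormedAddCommGroup X] [NormedSpace ℝ X] [CompleteSpace X]
    (z : ℕ → X) (ε : ℕ → ℝ)
    (hε : ∀ n, ε n ∈ Set.Ioo (0 : ℝ) 1)
    (hεlim : Tendsto ε atTop (nhds 0))
    (haic : ∀ t : ℕ → ℝ, Summable (fun n => |t n|) →
      (∑' n, (1 - ε n) * |t n|) ≤ ‖∑' n, t n • z n‖ ∧
        ‖∑' n, t n • z n‖ ≤ ∑' n, |t n|)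
    (u : ℕ → X) (hu : ∀ n, ‖u n‖ ≤ 1)
    (hdiff : Tendsto (fun n => ‖z n - u n‖) atTop (nhds 0)) :
    ∃ N : ℕ, ∃ ε' : ℕ → ℝ, (∀ n, ε' n ∈ Set.Ioo (0 : ℝ) 1) ∧
      Tendsto ε' atTop (nhds 0) ∧
      ∀ t : ℕ → ℝ, Summable (fun n => |t n|) →
        (∑' n, (1 - ε' n) * |t n|) ≤ ‖∑' n, t n • u (n + N)‖ ∧
          ‖∑' n, t n • u (n + N)‖ ≤ ∑' n, |t n| := by
  have hlim : Tendsto (fun n => ε n + ‖z n - u n‖) atTop (nhds 0) := by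
    simpa using hεlim.add hdiff
  obtain ⟨N, hN⟩ := eventually_atTop.mp (hlim.eventually_lt_const one_pos)
  have hz : AsympIsometricL1Bounds ε z := haic
  refine ⟨N, fun n => ε (n + N) + ‖z (n + N) - u (n + N)‖, fun n => ⟨?_, ?_⟩,
    hlim.comp (tendsto_add_atTop_nat N),
    (hz.comp_add_right N).add_norm_sub (fun n => hε (n + N)) (fun n => hu (n + N))⟩
  · exact add_pos_of_pos_of_nonneg (hε (n + N)).1 (norm_nonneg _)
  · exact hN (n + N) (Nat.le_add_left N n)
end
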